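/- Let ∇ = (H^1_{11}, G^k_{i1}, L^k_{ij}, C^{k(1)}_{i(j)}) be an h-normal Γ-linear connection on J^1(R,M) for a nonlinear connection Γ = (M^{(i)}_{(1)1}, N^{(i)}_{(1)j}). Then the adapted torsion components T̄^1_{11}, T̄^1_{1j}, P̄^{1(1)}_{1(j)} and R^{(m)}_{(1)11} of ∇ vanish, and the torsion d-tensor T of ∇ is determined by exactly eight families of local d-tensors: T^m_{1j} = −G^m_{j1}; T^m_{ij} = L^m_{ij} − L^m_{ji}; P^{m(1)}_{i(j)} = C^{m(1)}_{i(j)}; P^{(m)(1)}_{(1)1(j)} = ∂M^{(m)}_{(1)1}/∂y^j − G^m_{j1} + δ^m_j H^1_{11}; P^{(m)(1)}_{(1)i(j)} = ∂N^{(m)}_{(1)i}/∂y^j − L^m_{ji}; R^{(m)}_{(1)1j} = δM^{(m)}_{(1)1}/δx^j − δN^{(m)}_{(1)j}/δt; R^{(m)}_{(1)ij} = δN^{(m)}_{(1)i}/δx^j − δN^{(m)}_{(1)j}/δx^i; S^{(m)(1)(1)}_{(1)(i)(j)} = C^{m(1)}_{i(j)} − C^{m(1)}_{j(i)}. -/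

import Mathlib

noncomputable section

open scoped BigOperators

/-- Local spatial coordinates (fibre ℝⁿ). -/
abbrev Vec (n : ℕ) : Type := Fin n → ℝ

/-- Local coordinates `(t, xⁱ, yⁱ)` on the 1-jet bundle `J¹(ℝ, M)`. -/
abbrev J1 (n : ℕ) : Type := ℝ × Vec n × Vec n

namespace Jet

variable {n : ℕ}

/-- Partial derivative in the temporal variable `t`. -/
def pt (f : J1 n → ℝ) (p : J1 n) : ℝ := deriv (fun s => f (s, p.2)) p.1

/-- Partial derivative in the spatial variable `x^j`. -/
def px (f : J1 n → ℝ) (j : Fin n) (p : J1 n) : ℝ :=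
  deriv (fun s => f (p.1, Function.update p.2.1 j s, p.2.2)) (p.2.1 j)

/-- Partial derivative in the fibre variable `y^j`. -/
def py (f : J1 n → ℝ) (j : Fin n) (p : J1 n) : ℝ :=
  deriv (fun s => f (p.1, p.2.1, Function.update p.2.2 j s)) (p.2.2 j)

/-- Partial derivative of a function of the spatial variables only. -/
def pX (f : Vec n → ℝ) (j : Fin n) (x : Vec n) : ℝ :=
  deriv (fun s => f (Function.update x j s)) (x j)

/-- A change of coordinates `t̃ = t̃(t)`, `x̃ⁱ = x̃ⁱ(xʲ)` on the base `ℝ × M`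
(a gauge transformation of the bundle of configurations). -/
structure CoordChange (n : ℕ) where
  τ : ℝ → ℝ
  τinv : ℝ → ℝ
  σ : Vec n → Vec n
  σinv : Vec n → Vec n
  left_τ : Function.LeftInverse τinv τ
  right_τ : Function.RightInverse τinv τ
  left_σ : Function.LeftInverse σinv σ
  right_σ : Function.RightInverse σinv σ
  smooth_τ : ContDiff ℝ (⊤ : ℕ∞) τ
  smooth_τinv : ContDiff ℝ (⊤ : ℕ∞) τinv
  smooth_σ : ContDiff ℝ (⊤ : ℕ∞) σ
  smooth_σinv : ContDiff ℝ (⊤ : ℕ∞) σinv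

namespace CoordChange

variable (c : CoordChange n)

/-- `dt̃/dt`. -/
def dτ (t : ℝ) : ℝ := deriv c.τ t

/-- `dt/dt̃`, evaluated at `t̃ = τ t`. -/
def dτinv (t : ℝ) : ℝ := deriv c.τinv (c.τ t)

/-- The Jacobian `∂x̃^k/∂x^j`. -/
def Jac (k j : Fin n) (x : Vec n) : ℝ := pX (fun z => c.σ z k) j x

/-- The inverse Jacobian `∂x^i/∂x̃^j`, evaluated at `x̃ = σ x`. -/
def JacInv (i j : Fin n) (x : Vec n) : ℝ := pX (fun z => c.σinv z i) j (c.σ x)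

/-- The induced change of the fibre coordinates:
`ỹⁱ = (∂x̃ⁱ/∂xʲ)(dt/dt̃) yʲ`. -/
def yc (p : J1 n) : Vec n := fun i => (∑ j, c.Jac i j p.2.1 * p.2.2 j) * c.dτinv p.1

/-- The induced change of coordinates on `J¹(ℝ,M)`. -/
def Φ (p : J1 n) : J1 n := (c.τ p.1, c.σ p.2.1, c.yc p)

end CoordChange

/-- The transformation law of the local components of a temporal spray:
`2H̃⁽ᵏ⁾ = 2H⁽ʲ⁾ (dt/dt̃)² (∂x̃ᵏ/∂xʲ) − (dt/dt̃)(∂ỹᵏ/∂t)`. -/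
def TemporalSprayLaw (c : CoordChange n) (H H' : J1 n → Fin n → ℝ) : Prop :=
  ∀ (p : J1 n) (k : Fin n),
    2 * H' (c.Φ p) k =
      (∑ j, 2 * H p j * (c.dτinv p.1) ^ 2 * c.Jac k j p.2.1) -
        c.dτinv p.1 * pt (fun q => c.yc q k) p

/-- The transformation law of the local components of a spatial spray:
`2G̃⁽ᵏ⁾ = 2G⁽ʲ⁾ (dt/dt̃)² (∂x̃ᵏ/∂xʲ) − (∂xⁱ/∂x̃ʲ)(∂ỹᵏ/∂xⁱ) ỹʲ`. -/
def SpatialSprayLaw (c : CoordChange n) (G G' : J1 n → Fin n → ℝ) : Prop :=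
  ∀ (p : J1 n) (k : Fin n),
    2 * G' (c.Φ p) k =
      (∑ j, 2 * G p j * (c.dτinv p.1) ^ 2 * c.Jac k j p.2.1) -
        ∑ j, ∑ i, c.JacInv i j p.2.1 * px (fun q => c.yc q k) i p * c.yc p j

/-- The transformation law of a temporal nonlinear connection:
`M̃⁽ʲ⁾(dt̃/dt) = M⁽ᵏ⁾(dt/dt̃)(∂x̃ʲ/∂xᵏ) − ∂ỹʲ/∂t`. -/
def TemporalNLCLaw (c : CoordChange n) (M M' : J1 n → Fin n → ℝ) : Prop :=
  ∀ (p : J1 n) (j : Fin n),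
    M' (c.Φ p) j * c.dτ p.1 =
      (∑ k, M p k * c.dτinv p.1 * c.Jac j k p.2.1) - pt (fun q => c.yc q j) p

/-- The transformation law of a spatial nonlinear connection:
`Ñ⁽ʲ⁾₍ₖ₎(∂x̃ᵏ/∂xⁱ) = N⁽ᵏ⁾₍ᵢ₎(dt/dt̃)(∂x̃ʲ/∂xᵏ) − ∂ỹʲ/∂xⁱ`. -/
def SpatialNLCLaw (c : CoordChange n) (N N' : J1 n → Fin n → Fin n → ℝ) : Prop :=
  ∀ (p : J1 n) (j i : Fin n),
    (∑ k, N' (c.Φ p) j k * c.Jac k i p.2.1) =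
      (∑ k, N p k i * c.dτinv p.1 * c.Jac j k p.2.1) - px (fun q => c.yc q j) i p

/-- Transformation law of a (semi-Riemannian) temporal metric `h₁₁(t)`. -/
def TemporalMetricLaw (c : CoordChange n) (h h' : ℝ → ℝ) : Prop :=
  ∀ t : ℝ, h' (c.τ t) = h t * (c.dτinv t) ^ 2

/-- Transformation law of a (semi-Riemannian) spatial metric `φᵢⱼ(x)`. -/
def SpatialMetricLaw (c : CoordChange n) (φ φ' : Vec n → Matrix (Fin n) (Fin n) ℝ) : Prop :=
  ∀ (x : Vec n) (i j : Fin n),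
    φ' (c.σ x) i j = ∑ k, ∑ l, φ x k l * c.JacInv k i x * c.JacInv l j x

/-- The Christoffel symbol `H¹₁₁ = (h¹¹/2) dh₁₁/dt` of a temporal metric. -/
def christoffelT (h : ℝ → ℝ) (t : ℝ) : ℝ := deriv h t / (2 * h t)

/-- The Christoffel symbols `γⁱⱼₖ` of a spatial metric `φ`. -/
def christoffelS (φ : Vec n → Matrix (Fin n) (Fin n) ℝ) (i j k : Fin n) (x : Vec n) : ℝ :=
  (1 / 2) * ∑ m, (φ x)⁻¹ i m *
    (pX (fun z => φ z m j) k x + pX (fun z => φ z m k) j x - pX (fun z => φ z j k) m x)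

/-- The adapted temporal derivative `δf/δt = ∂f/∂t − M⁽ʲ⁾₍₁₎₁ ∂f/∂yʲ`. -/
def deltaT {n : ℕ} (M : J1 n → Fin n → ℝ) (f : J1 n → ℝ) (p : J1 n) : ℝ :=
  pt f p - ∑ j, M p j * py f j p

/-- The adapted spatial derivative `δf/δxᵏ = ∂f/∂xᵏ − N⁽ʲ⁾₍₁₎ₖ ∂f/∂yʲ`. -/
def deltaX {n : ℕ} (N : J1 n → Fin n → Fin n → ℝ) (f : J1 n → ℝ) (k : Fin n)
    (p : J1 n) : ℝ :=
  px f k p - ∑ j, N p j k * py f j p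

/-- The nine local coefficient families of a `Γ`-linear connection `∇` on `J¹(ℝ,M)`:
`∇Γ = (Ḡ¹₁₁, Gᵏᵢ₁, G⁽ᵏ⁾⁽¹⁾₍₁₎₍ᵢ₎₁, L̄¹₁ⱼ, Lᵏᵢⱼ, L⁽ᵏ⁾⁽¹⁾₍₁₎₍ᵢ₎ⱼ, C̄¹⁽¹⁾₁₍ⱼ₎, Cᵏ⁽¹⁾ᵢ₍ⱼ₎,
C⁽ᵏ⁾⁽¹⁾⁽¹⁾₍₁₎₍ᵢ₎₍ⱼ₎)`. -/
structure GammaCoeffs (n : ℕ) where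
  Gbar : J1 n → ℝ
  Gc : J1 n → Fin n → Fin n → ℝ
  Gv : J1 n → Fin n → Fin n → ℝ
  Lbar : J1 n → Fin n → ℝ
  Lc : J1 n → Fin n → Fin n → Fin n → ℝ
  Lv : J1 n → Fin n → Fin n → Fin n → ℝ
  Cbar : J1 n → Fin n → ℝ
  Cc : J1 n → Fin n → Fin n → Fin n → ℝ
  Cv : J1 n → Fin n → Fin n → Fin n → ℝ

/-- The covariant derivative `∇_{δ/δt} W` of a vector field `W`, written in adapted
components, of a `Γ`-linear connection with coefficients `Γ`. -/
def covT {n : ℕ} (M : J1 n → Fin n → ℝ) (Γ : GammaCoeffs n) (W : J1 n → J1 n)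
    (p : J1 n) : J1 n :=
  (deltaT M (fun q => (W q).1) p + (W p).1 * Γ.Gbar p,
   fun k => deltaT M (fun q => (W q).2.1 k) p + ∑ i, (W p).2.1 i * Γ.Gc p k i,
   fun k => deltaT M (fun q => (W q).2.2 k) p + ∑ i, (W p).2.2 i * Γ.Gv p k i)

/-- `∇_{δ/δxʲ} W` in adapted components. -/
def covX {n : ℕ} (N : J1 n → Fin n → Fin n → ℝ) (Γ : GammaCoeffs n) (W : J1 n → J1 n)
    (j : Fin n) (p : J1 n) : J1 n :=
  (deltaX N (fun q => (W q).1) j p + (W p).1 * Γ.Lbar p j,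
   fun k => deltaX N (fun q => (W q).2.1 k) j p + ∑ i, (W p).2.1 i * Γ.Lc p k i j,
   fun k => deltaX N (fun q => (W q).2.2 k) j p + ∑ i, (W p).2.2 i * Γ.Lv p k i j)

/-- `∇_{∂/∂yʲ} W` in adapted components. -/
def covY {n : ℕ} (Γ : GammaCoeffs n) (W : J1 n → J1 n) (j : Fin n) (p : J1 n) : J1 n :=
  (py (fun q => (W q).1) j p + (W p).1 * Γ.Cbar p j,
   fun k => py (fun q => (W q).2.1 k) j p + ∑ i, (W p).2.1 i * Γ.Cc p k i j,
   fun k => py (fun q => (W q).2.2 k) j p + ∑ i, (W p).2.2 i * Γ.Cv p k i j)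

/-- The coefficients of an `h`-normal `Γ`-linear connection, determined by the four
families `(H¹₁₁, Gᵏᵢ₁, Lᵏᵢⱼ, Cᵏ⁽¹⁾ᵢ₍ⱼ₎)` (cf. the structure theorem for `h`-normal
connections): `Ḡ¹₁₁ = H¹₁₁`, `G⁽ᵏ⁾⁽¹⁾₍₁₎₍ᵢ₎₁ = Gᵏᵢ₁ − δᵏᵢH¹₁₁`, `L̄ = 0`,
`L⁽ᵏ⁾⁽¹⁾₍₁₎₍ᵢ₎ⱼ = Lᵏᵢⱼ`, `C̄ = 0`, `C⁽ᵏ⁾⁽¹⁾⁽¹⁾₍₁₎₍ᵢ₎₍ⱼ₎ = Cᵏ⁽¹⁾ᵢ₍ⱼ₎`. -/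
def hNormalCoeffs {n : ℕ} (h : ℝ → ℝ) (Gc : J1 n → Fin n → Fin n → ℝ)
    (Lc Cc : J1 n → Fin n → Fin n → Fin n → ℝ) : GammaCoeffs n where
  Gbar := fun p => christoffelT h p.1
  Gc := Gc
  Gv := fun p k i => Gc p k i - (if k = i then christoffelT h p.1 else 0)
  Lbar := fun _ _ => 0
  Lc := Lc
  Lv := Lc
  Cbar := fun _ _ => 0
  Cc := Cc
  Cv := Cc

/-- Natural components of a vector field given in adapted components. -/
def natOfAd {n : ℕ} (M : J1 n → Fin n → ℝ) (N : J1 n → Fin n → Fin n → ℝ)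
    (p : J1 n) (w : J1 n) : J1 n :=
  (w.1, w.2.1, fun j => w.2.2 j - w.1 * M p j - ∑ i, N p j i * w.2.1 i)

/-- Adapted components of a vector field given in natural components. -/
def adOfNat {n : ℕ} (M : J1 n → Fin n → ℝ) (N : J1 n → Fin n → Fin n → ℝ)
    (p : J1 n) (w : J1 n) : J1 n :=
  (w.1, w.2.1, fun j => w.2.2 j + w.1 * M p j + ∑ i, N p j i * w.2.1 i)

/-- Lie bracket of two vector fields, written in natural components. -/
def bracket {n : ℕ} (X Y : J1 n → J1 n) (p : J1 n) : J1 n :=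
  fderiv ℝ Y p (X p) - fderiv ℝ X p (Y p)

/-- `δ/δt` as a vector field in natural components. -/
def frameT {n : ℕ} (M : J1 n → Fin n → ℝ) (p : J1 n) : J1 n :=
  ((1 : ℝ), (0 : Vec n), fun j => -(M p j))

/-- `δ/δxⁱ` as a vector field in natural components. -/
def frameX {n : ℕ} (N : J1 n → Fin n → Fin n → ℝ) (i : Fin n) (p : J1 n) : J1 n :=
  ((0 : ℝ), (Pi.single i 1 : Vec n), fun j => -(N p j i))

/-- `∂/∂yⁱ` as a vector field in natural components. -/
def frameY {n : ℕ} (i : Fin n) (_p : J1 n) : J1 n :=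
  ((0 : ℝ), (0 : Vec n), (Pi.single i 1 : Vec n))

/-- The adapted components of the torsion `T(X,Y) = ∇_X Y − ∇_Y X − [X,Y]` of the
connection with coefficients `Γ`, for `X`, `Y` given by adapted-frame covariant derivative
operators `DX`, `DY` applied to the constant adapted frame fields `aY`, `aX`, and natural
frame fields `nX`, `nY`. -/
def torsion {n : ℕ} (M : J1 n → Fin n → ℝ) (N : J1 n → Fin n → Fin n → ℝ)
    (DX DY : (J1 n → J1 n) → J1 n → J1 n) (aX aY : J1 n) (nX nY : J1 n → J1 n)
    (p : J1 n) : J1 n :=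
  DX (fun _ => aY) p - DY (fun _ => aX) p - adOfNat M N p (bracket nX nY p)

/-! ### Auxiliary lemmas for the torsion computation -/

lemma pt_const (c : ℝ) (p : J1 n) : pt (fun _ => c) p = 0 := by simp [pt]

lemma px_const (c : ℝ) (j : Fin n) (p : J1 n) : px (fun _ => c) j p = 0 := by simp [px]

lemma py_const (c : ℝ) (j : Fin n) (p : J1 n) : py (fun _ => c) j p = 0 := by simp [py]

lemma deltaT_const (M : J1 n → Fin n → ℝ) (c : ℝ) (p : J1 n) :
    deltaT M (fun _ => c) p = 0 := by simp [deltaT, pt_const, py_const]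

lemma deltaX_const (N : J1 n → Fin n → Fin n → ℝ) (c : ℝ) (j : Fin n) (p : J1 n) :
    deltaX N (fun _ => c) j p = 0 := by simp [deltaX, px_const, py_const]

lemma hasDerivAt_update (x : Vec n) (j : Fin n) (s : ℝ) :
    HasDerivAt (fun s => Function.update x j s) (Pi.single j 1 : Vec n) s := by
  rw [hasDerivAt_pi]
  intro i
  simp only [Function.update_apply, Pi.single_apply]
  by_cases hij : i = j
  · simpa [hij] using hasDerivAt_id' s
  · simpa [hij] using hasDerivAt_const s (x i)

lemma pt_eq_fderiv {f : J1 n → ℝ} (p : J1 n) (hf : DifferentiableAt ℝ f p) :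
    pt f p = fderiv ℝ f p ((1:ℝ), (0:Vec n), (0:Vec n)) := by
  have hc : HasDerivAt (fun s : ℝ => ((s, p.2) : J1 n)) ((1:ℝ), (0:Vec n), (0:Vec n)) p.1 :=
    HasDerivAt.prodMk (hasDerivAt_id p.1) (hasDerivAt_const p.1 p.2)
  exact (hf.hasFDerivAt.comp_hasDerivAt p.1 hc).deriv

lemma px_eq_fderiv {f : J1 n → ℝ} (p : J1 n) (j : Fin n) (hf : DifferentiableAt ℝ f p) :
    px f j p = fderiv ℝ f p ((0:ℝ), (Pi.single j 1 : Vec n), (0:Vec n)) := by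
  have hc : HasDerivAt (fun s : ℝ => ((p.1, Function.update p.2.1 j s, p.2.2) : J1 n))
      ((0:ℝ), (Pi.single j 1 : Vec n), (0:Vec n)) (p.2.1 j) :=
    HasDerivAt.prodMk (hasDerivAt_const _ _) (HasDerivAt.prodMk (hasDerivAt_update _ _ _) (hasDerivAt_const _ _))
  have hfd : HasFDerivAt f (fderiv ℝ f p)
      ((p.1, Function.update p.2.1 j (p.2.1 j), p.2.2) : J1 n) := by
    rw [show ((p.1, Function.update p.2.1 j (p.2.1 j), p.2.2) : J1 n) = p by simp]
    exact hf.hasFDerivAt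
  exact (hfd.comp_hasDerivAt (p.2.1 j) hc).deriv

lemma py_eq_fderiv {f : J1 n → ℝ} (p : J1 n) (j : Fin n) (hf : DifferentiableAt ℝ f p) :
    py f j p = fderiv ℝ f p ((0:ℝ), (0:Vec n), (Pi.single j 1 : Vec n)) := by
  have hc : HasDerivAt (fun s : ℝ => ((p.1, p.2.1, Function.update p.2.2 j s) : J1 n))
      ((0:ℝ), (0:Vec n), (Pi.single j 1 : Vec n)) (p.2.2 j) :=
    HasDerivAt.prodMk (hasDerivAt_const _ _) (HasDerivAt.prodMk (hasDerivAt_const _ _) (hasDerivAt_update _ _ _))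
  have hfd : HasFDerivAt f (fderiv ℝ f p)
      ((p.1, p.2.1, Function.update p.2.2 j (p.2.2 j)) : J1 n) := by
    rw [show ((p.1, p.2.1, Function.update p.2.2 j (p.2.2 j)) : J1 n) = p by simp]
    exact hf.hasFDerivAt
  exact (hfd.comp_hasDerivAt (p.2.2 j) hc).deriv

/-- Directional derivative formula for smooth scalar functions on `J¹(ℝ,M)`. -/
lemma fderiv_eval {f : J1 n → ℝ} (hf : Differentiable ℝ f) (p v : J1 n) :
    fderiv ℝ f p v =
      v.1 * pt f p + (∑ i, v.2.1 i * px f i p) + ∑ i, v.2.2 i * py f i p := by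
  have hv : v = v.1 • (((1:ℝ), (0:Vec n), (0:Vec n)) : J1 n)
      + (∑ i, v.2.1 i • (((0:ℝ), (Pi.single i 1 : Vec n), (0:Vec n)) : J1 n))
      + ∑ i, v.2.2 i • (((0:ℝ), (0:Vec n), (Pi.single i 1 : Vec n)) : J1 n) := by
    refine Prod.ext ?_ (Prod.ext ?_ ?_) <;>
      simp [Prod.fst_sum, Prod.snd_sum, ← Pi.single_smul, Finset.univ_sum_single]
  have hLv : fderiv ℝ f p v = v.1 * fderiv ℝ f p (((1:ℝ), (0:Vec n), (0:Vec n)) : J1 n)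
      + (∑ i, v.2.1 i * fderiv ℝ f p (((0:ℝ), (Pi.single i 1 : Vec n), (0:Vec n)) : J1 n))
      + ∑ i, v.2.2 i * fderiv ℝ f p (((0:ℝ), (0:Vec n), (Pi.single i 1 : Vec n)) : J1 n) := by
    conv_lhs => rw [hv]
    rw [map_add, map_add, map_sum, map_sum, map_smul]
    simp only [map_smul, smul_eq_mul]
  have h2 : ∀ i : Fin n,
      fderiv ℝ f p (((0:ℝ), (Pi.single i 1 : Vec n), (0:Vec n)) : J1 n) = px f i p :=
    fun i => (px_eq_fderiv p i (hf p)).symm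
  have h3 : ∀ i : Fin n,
      fderiv ℝ f p (((0:ℝ), (0:Vec n), (Pi.single i 1 : Vec n)) : J1 n) = py f i p :=
    fun i => (py_eq_fderiv p i (hf p)).symm
  simp only [hLv, ← pt_eq_fderiv p (hf p), h2, h3]

lemma fderiv_neg_apply (f : J1 n → ℝ) (p v : J1 n) :
    fderiv ℝ (fun q => -(f q)) p v = -(fderiv ℝ f p v) := by
  rw [fderiv_fun_neg]; rfl

/-- Derivative along the adapted temporal frame direction. -/
lemma fderiv_dirT {f : J1 n → ℝ} (hf : Differentiable ℝ f) (M : J1 n → Fin n → ℝ)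
    (p : J1 n) :
    fderiv ℝ f p (((1:ℝ), (0:Vec n), fun k => -(M p k)) : J1 n) = deltaT M f p := by
  rw [fderiv_eval hf]
  simp [deltaT, Finset.sum_neg_distrib, sub_eq_add_neg]

/-- Derivative along the adapted spatial frame direction. -/
lemma fderiv_dirX {f : J1 n → ℝ} (hf : Differentiable ℝ f)
    (N : J1 n → Fin n → Fin n → ℝ) (j : Fin n) (p : J1 n) :
    fderiv ℝ f p (((0:ℝ), (Pi.single j 1 : Vec n), fun k => -(N p k j)) : J1 n) =
      deltaX N f j p := by
  rw [fderiv_eval hf]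
  simp [deltaX, Pi.single_apply, ite_mul, Finset.sum_neg_distrib, sub_eq_add_neg]

/-- Derivative along the vertical frame direction. -/
lemma fderiv_dirY {f : J1 n → ℝ} (hf : Differentiable ℝ f) (j : Fin n) (p : J1 n) :
    fderiv ℝ f p (((0:ℝ), (0:Vec n), (Pi.single j 1 : Vec n)) : J1 n) = py f j p :=
  (py_eq_fderiv p j (hf p)).symm

/-- Derivative of a "frame-like" vector field with constant first two components. -/
lemma fderiv_frame (a : ℝ) (b : Vec n) {g : Fin n → J1 n → ℝ}
    (hg : ∀ m, Differentiable ℝ (g m)) (p v : J1 n) :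
    fderiv ℝ (fun q => ((a, b, fun m => g m q) : J1 n)) p v =
      ((0:ℝ), (0:Vec n), fun m => fderiv ℝ (g m) p v) := by
  have hF : HasFDerivAt (fun q => ((a, b, fun m => g m q) : J1 n))
      ((0 : J1 n →L[ℝ] ℝ).prod ((0 : J1 n →L[ℝ] Vec n).prod
        (ContinuousLinearMap.pi fun m => fderiv ℝ (g m) p))) p :=
    HasFDerivAt.prodMk (hasFDerivAt_const a p) (HasFDerivAt.prodMk (hasFDerivAt_const b p)
      (hasFDerivAt_pi.2 fun m => (hg m p).hasFDerivAt))
  rw [hF.fderiv]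
  rfl

/-- For an `h`-normal `Γ`-linear connection
`∇ = (H¹₁₁, Gᵏᵢ₁, Lᵏᵢⱼ, Cᵏ⁽¹⁾ᵢ₍ⱼ₎)` on `J¹(ℝ,M)`, the adapted torsion components
`T̄¹₁₁`, `T̄¹₁ⱼ`, `P̄¹⁽¹⁾₁₍ⱼ₎` and `R⁽ᵐ⁾₍₁₎₁₁` vanish, and the torsion d-tensor is
determined by exactly eight families of local d-tensors:
`Tᵐ₁ⱼ = −Gᵐⱼ₁`, `Tᵐᵢⱼ = Lᵐᵢⱼ − Lᵐⱼᵢ`, `Pᵐ⁽¹⁾ᵢ₍ⱼ₎ = Cᵐ⁽¹⁾ᵢ₍ⱼ₎`,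
`P⁽ᵐ⁾⁽¹⁾₍₁₎₁₍ⱼ₎ = ∂M⁽ᵐ⁾₍₁₎₁/∂yʲ − Gᵐⱼ₁ + δᵐⱼH¹₁₁`,
`P⁽ᵐ⁾⁽¹⁾₍₁₎ᵢ₍ⱼ₎ = ∂N⁽ᵐ⁾₍₁₎ᵢ/∂yʲ − Lᵐⱼᵢ`,
`R⁽ᵐ⁾₍₁₎₁ⱼ = δM⁽ᵐ⁾₍₁₎₁/δxʲ − δN⁽ᵐ⁾₍₁₎ⱼ/δt`,
`R⁽ᵐ⁾₍₁₎ᵢⱼ = δN⁽ᵐ⁾₍₁₎ᵢ/δxʲ − δN⁽ᵐ⁾₍₁₎ⱼ/δxⁱ`,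
`S⁽ᵐ⁾⁽¹⁾⁽¹⁾₍₁₎₍ᵢ₎₍ⱼ₎ = Cᵐ⁽¹⁾ᵢ₍ⱼ₎ − Cᵐ⁽¹⁾ⱼ₍ᵢ₎`. -/
theorem torsion_of_h_normal_connection
    {n : ℕ} (h : ℝ → ℝ) (hsm : ContDiff ℝ (⊤ : ℕ∞) h) (hne : ∀ t, h t ≠ 0)
    (M : J1 n → Fin n → ℝ) (N : J1 n → Fin n → Fin n → ℝ)
    (hM : ContDiff ℝ (⊤ : ℕ∞) M) (hN : ∀ i, ContDiff ℝ (⊤ : ℕ∞) (fun p => N p i))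
    (Gc : J1 n → Fin n → Fin n → ℝ) (Lc Cc : J1 n → Fin n → Fin n → Fin n → ℝ)
    (hGc : ∀ k i, ContDiff ℝ (⊤ : ℕ∞) (fun p => Gc p k i))
    (hLc : ∀ k i j, ContDiff ℝ (⊤ : ℕ∞) (fun p => Lc p k i j))
    (hCc : ∀ k i j, ContDiff ℝ (⊤ : ℕ∞) (fun p => Cc p k i j)) :
    -- T(δ/δt, δ/δt) = 0 (in particular `T̄¹₁₁ = 0` and `R⁽ᵐ⁾₍₁₎₁₁ = 0`)
    (∀ p : J1 n,
      torsion M N (covT M (hNormalCoeffs h Gc Lc Cc)) (covT M (hNormalCoeffs h Gc Lc Cc))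
        ((1 : ℝ), 0, 0) ((1 : ℝ), 0, 0) (frameT M) (frameT M) p = 0) ∧
    -- T(δ/δxʲ, δ/δt): `T̄¹₁ⱼ = 0`, `Tᵐ₁ⱼ = −Gᵐⱼ₁`, `R⁽ᵐ⁾₍₁₎₁ⱼ = δM⁽ᵐ⁾/δxʲ − δN⁽ᵐ⁾ⱼ/δt`
    (∀ (p : J1 n) (j : Fin n),
      torsion M N (fun W => covX N (hNormalCoeffs h Gc Lc Cc) W j)
          (covT M (hNormalCoeffs h Gc Lc Cc))
          ((0 : ℝ), Pi.single j 1, 0) ((1 : ℝ), 0, 0) (frameX N j) (frameT M) p =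
        ((0 : ℝ), fun m => -(Gc p m j),
          fun m => deltaX N (fun q => M q m) j p - deltaT M (fun q => N q m j) p)) ∧
    -- T(δ/δxʲ, δ/δxⁱ): `Tᵐᵢⱼ = Lᵐᵢⱼ − Lᵐⱼᵢ`, `R⁽ᵐ⁾₍₁₎ᵢⱼ = δN⁽ᵐ⁾ᵢ/δxʲ − δN⁽ᵐ⁾ⱼ/δxⁱ`
    (∀ (p : J1 n) (i j : Fin n),
      torsion M N (fun W => covX N (hNormalCoeffs h Gc Lc Cc) W j)
          (fun W => covX N (hNormalCoeffs h Gc Lc Cc) W i)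
          ((0 : ℝ), Pi.single j 1, 0) ((0 : ℝ), Pi.single i 1, 0)
          (frameX N j) (frameX N i) p =
        ((0 : ℝ), fun m => Lc p m i j - Lc p m j i,
          fun m => deltaX N (fun q => N q m i) j p - deltaX N (fun q => N q m j) i p)) ∧
    -- T(∂/∂yʲ, δ/δt): `P̄¹⁽¹⁾₁₍ⱼ₎ = 0`, `P⁽ᵐ⁾⁽¹⁾₍₁₎₁₍ⱼ₎ = ∂M⁽ᵐ⁾/∂yʲ − Gᵐⱼ₁ + δᵐⱼH¹₁₁`
    (∀ (p : J1 n) (j : Fin n),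
      torsion M N (fun W => covY (hNormalCoeffs h Gc Lc Cc) W j)
          (covT M (hNormalCoeffs h Gc Lc Cc))
          ((0 : ℝ), 0, Pi.single j 1) ((1 : ℝ), 0, 0) (frameY j) (frameT M) p =
        ((0 : ℝ), 0,
          fun m => py (fun q => M q m) j p - Gc p m j +
            (if m = j then christoffelT h p.1 else 0))) ∧
    -- T(∂/∂yʲ, δ/δxⁱ): `Pᵐ⁽¹⁾ᵢ₍ⱼ₎ = Cᵐ⁽¹⁾ᵢ₍ⱼ₎`, `P⁽ᵐ⁾⁽¹⁾₍₁₎ᵢ₍ⱼ₎ = ∂N⁽ᵐ⁾ᵢ/∂yʲ − Lᵐⱼᵢ`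
    (∀ (p : J1 n) (i j : Fin n),
      torsion M N (fun W => covY (hNormalCoeffs h Gc Lc Cc) W j)
          (fun W => covX N (hNormalCoeffs h Gc Lc Cc) W i)
          ((0 : ℝ), 0, Pi.single j 1) ((0 : ℝ), Pi.single i 1, 0)
          (frameY j) (frameX N i) p =
        ((0 : ℝ), fun m => Cc p m i j,
          fun m => py (fun q => N q m i) j p - Lc p m j i)) ∧
    -- T(∂/∂yʲ, ∂/∂yⁱ): `S⁽ᵐ⁾⁽¹⁾⁽¹⁾₍₁₎₍ᵢ₎₍ⱼ₎ = Cᵐ⁽¹⁾ᵢ₍ⱼ₎ − Cᵐ⁽¹⁾ⱼ₍ᵢ₎`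
    (∀ (p : J1 n) (i j : Fin n),
      torsion M N (fun W => covY (hNormalCoeffs h Gc Lc Cc) W j)
          (fun W => covY (hNormalCoeffs h Gc Lc Cc) W i)
          ((0 : ℝ), 0, Pi.single j 1) ((0 : ℝ), 0, Pi.single i 1)
          (frameY j) (frameY i) p =
        ((0 : ℝ), 0, fun m => Cc p m i j - Cc p m j i)) := by
  have hMm : ∀ m, Differentiable ℝ (fun q => M q m) :=
    fun m => (differentiable_pi.mp (hM.differentiable (by simp))) m
  have hNm : ∀ m j, Differentiable ℝ (fun q => N q m j) :=
    fun m j => (differentiable_pi.mp ((hN m).differentiable (by simp))) j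
  refine ⟨?_, ?_, ?_, ?_, ?_, ?_⟩
  -- Case 1 : T(δ/δt, δ/δt) = 0
  · intro p
    have hz : adOfNat M N p 0 = 0 := by
      refine Prod.ext rfl (Prod.ext rfl ?_)
      funext m
      simp [adOfNat]
    simp [torsion, bracket, hz]
  -- Case 2 : T(δ/δxʲ, δ/δt)
  · intro p j
    have e1 : fderiv ℝ (frameT M) p (frameX N j p) =
        ((0:ℝ), (0:Vec n), fun m => fderiv ℝ (fun q => -(M q m)) p (frameX N j p)) :=
      fderiv_frame (1:ℝ) (0:Vec n) (fun m => (hMm m).neg) p (frameX N j p)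
    have e2 : fderiv ℝ (frameX N j) p (frameT M p) =
        ((0:ℝ), (0:Vec n), fun m => fderiv ℝ (fun q => -(N q m j)) p (frameT M p)) :=
      fderiv_frame (0:ℝ) (Pi.single j 1 : Vec n) (fun m => (hNm m j).neg) p (frameT M p)
    have dX : ∀ m, fderiv ℝ (fun q => M q m) p (frameX N j p) =
        deltaX N (fun q => M q m) j p := fun m => fderiv_dirX (hMm m) N j p
    have dT : ∀ m, fderiv ℝ (fun q => N q m j) p (frameT M p) =
        deltaT M (fun q => N q m j) p := fun m => fderiv_dirT (hNm m j) M p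
    have hb : bracket (frameX N j) (frameT M) p =
        ((0:ℝ), (0:Vec n), fun m =>
          deltaT M (fun q => N q m j) p - deltaX N (fun q => M q m) j p) := by
      rw [bracket, e1, e2]
      refine Prod.ext (by simp) (Prod.ext (by simp) ?_)
      funext m
      simp only [Prod.snd_sub, Pi.sub_apply, fderiv_neg_apply, dX, dT]
      ring
    refine Prod.ext ?_ (Prod.ext ?_ ?_)
    · simp [torsion, hb, covX, covT, hNormalCoeffs, adOfNat, deltaX_const, deltaT_const]
    · funext m
      simp [torsion, hb, covX, covT, hNormalCoeffs, adOfNat, deltaX_const, deltaT_const,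
        Pi.single_apply, ite_mul]
    · funext m
      simp only [torsion, hb, covX, covT, hNormalCoeffs, adOfNat, Prod.snd_sub, Prod.fst_sub,
        Pi.sub_apply]
      simp [deltaX_const, deltaT_const]
  -- Case 3 : T(δ/δxʲ, δ/δxⁱ)
  · intro p i j
    have e1 : fderiv ℝ (frameX N i) p (frameX N j p) =
        ((0:ℝ), (0:Vec n), fun m => fderiv ℝ (fun q => -(N q m i)) p (frameX N j p)) :=
      fderiv_frame (0:ℝ) (Pi.single i 1 : Vec n) (fun m => (hNm m i).neg) p (frameX N j p)
    have e2 : fderiv ℝ (frameX N j) p (frameX N i p) =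
        ((0:ℝ), (0:Vec n), fun m => fderiv ℝ (fun q => -(N q m j)) p (frameX N i p)) :=
      fderiv_frame (0:ℝ) (Pi.single j 1 : Vec n) (fun m => (hNm m j).neg) p (frameX N i p)
    have dXi : ∀ m, fderiv ℝ (fun q => N q m i) p (frameX N j p) =
        deltaX N (fun q => N q m i) j p := fun m => fderiv_dirX (hNm m i) N j p
    have dXj : ∀ m, fderiv ℝ (fun q => N q m j) p (frameX N i p) =
        deltaX N (fun q => N q m j) i p := fun m => fderiv_dirX (hNm m j) N i p
    have hb : bracket (frameX N j) (frameX N i) p =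
        ((0:ℝ), (0:Vec n), fun m =>
          deltaX N (fun q => N q m j) i p - deltaX N (fun q => N q m i) j p) := by
      rw [bracket, e1, e2]
      refine Prod.ext (by simp) (Prod.ext (by simp) ?_)
      funext m
      simp only [Prod.snd_sub, Pi.sub_apply, fderiv_neg_apply, dXi, dXj]
      ring
    refine Prod.ext ?_ (Prod.ext ?_ ?_)
    · simp [torsion, hb, covX, hNormalCoeffs, adOfNat, deltaX_const]
    · funext m
      simp [torsion, hb, covX, hNormalCoeffs, adOfNat, deltaX_const,
        Pi.single_apply, ite_mul]
    · funext m
      simp only [torsion, hb, covX, hNormalCoeffs, adOfNat, Prod.snd_sub, Prod.fst_sub,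
        Pi.sub_apply]
      simp [deltaX_const]
  -- Case 4 : T(∂/∂yʲ, δ/δt)
  · intro p j
    have e1 : fderiv ℝ (frameT M) p (frameY j p) =
        ((0:ℝ), (0:Vec n), fun m => fderiv ℝ (fun q => -(M q m)) p (frameY j p)) :=
      fderiv_frame (1:ℝ) (0:Vec n) (fun m => (hMm m).neg) p (frameY j p)
    have e2 : fderiv ℝ (frameY j) p = 0 :=
      (hasFDerivAt_const (((0:ℝ), (0:Vec n), (Pi.single j 1 : Vec n)) : J1 n) p).fderiv
    have dY : ∀ m, fderiv ℝ (fun q => M q m) p (frameY j p) =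
        py (fun q => M q m) j p := fun m => fderiv_dirY (hMm m) j p
    have hb : bracket (frameY j) (frameT M) p =
        ((0:ℝ), (0:Vec n), fun m => -(py (fun q => M q m) j p)) := by
      rw [bracket, e1, e2]
      refine Prod.ext (by simp) (Prod.ext (by simp) ?_)
      funext m
      simp [fderiv_neg_apply, dY]
    refine Prod.ext ?_ (Prod.ext ?_ ?_)
    · simp [torsion, hb, covY, covT, hNormalCoeffs, adOfNat, py_const, deltaT_const]
    · funext m
      simp [torsion, hb, covY, covT, hNormalCoeffs, adOfNat, py_const, deltaT_const,
        Pi.single_apply, ite_mul]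
    · funext m
      simp only [torsion, hb, covY, covT, hNormalCoeffs, adOfNat, Prod.snd_sub, Prod.fst_sub,
        Pi.sub_apply]
      simp [py_const, deltaT_const, Pi.single_apply, ite_mul]
      ring
  -- Case 5 : T(∂/∂yʲ, δ/δxⁱ)
  · intro p i j
    have e1 : fderiv ℝ (frameX N i) p (frameY j p) =
        ((0:ℝ), (0:Vec n), fun m => fderiv ℝ (fun q => -(N q m i)) p (frameY j p)) :=
      fderiv_frame (0:ℝ) (Pi.single i 1 : Vec n) (fun m => (hNm m i).neg) p (frameY j p)
    have e2 : fderiv ℝ (frameY j) p = 0 :=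
      (hasFDerivAt_const (((0:ℝ), (0:Vec n), (Pi.single j 1 : Vec n)) : J1 n) p).fderiv
    have dY : ∀ m, fderiv ℝ (fun q => N q m i) p (frameY j p) =
        py (fun q => N q m i) j p := fun m => fderiv_dirY (hNm m i) j p
    have hb : bracket (frameY j) (frameX N i) p =
        ((0:ℝ), (0:Vec n), fun m => -(py (fun q => N q m i) j p)) := by
      rw [bracket, e1, e2]
      refine Prod.ext (by simp) (Prod.ext (by simp) ?_)
      funext m
      simp [fderiv_neg_apply, dY]
    refine Prod.ext ?_ (Prod.ext ?_ ?_)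
    · simp [torsion, hb, covY, covX, hNormalCoeffs, adOfNat, py_const, deltaX_const]
    · funext m
      simp [torsion, hb, covY, covX, hNormalCoeffs, adOfNat, py_const, deltaX_const,
        Pi.single_apply, ite_mul]
    · funext m
      simp only [torsion, hb, covY, covX, hNormalCoeffs, adOfNat, Prod.snd_sub, Prod.fst_sub,
        Pi.sub_apply]
      simp [py_const, deltaX_const, Pi.single_apply, ite_mul]
      ring
  -- Case 6 : T(∂/∂yʲ, ∂/∂yⁱ)
  · intro p i j
    have e1 : fderiv ℝ (frameY i) p = 0 :=
      (hasFDerivAt_const (((0:ℝ), (0:Vec n), (Pi.single i 1 : Vec n)) : J1 n) p).fderiv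
    have e2 : fderiv ℝ (frameY j) p = 0 :=
      (hasFDerivAt_const (((0:ℝ), (0:Vec n), (Pi.single j 1 : Vec n)) : J1 n) p).fderiv
    have hb : bracket (frameY j) (frameY i) p = 0 := by
      rw [bracket, e1, e2]
      simp
    refine Prod.ext ?_ (Prod.ext ?_ ?_)
    · simp [torsion, hb, covY, hNormalCoeffs, adOfNat, py_const]
    · funext m
      simp [torsion, hb, covY, hNormalCoeffs, adOfNat, py_const]
    · funext m
      simp only [torsion, hb, covY, hNormalCoeffs, adOfNat, Prod.snd_sub, Prod.fst_sub,
        Pi.sub_apply]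
      simp [py_const, Pi.single_apply, ite_mul]

end Jet
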